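/- Suppose q(0) ≠ 0, a ≥ 1, and either r = 0 or (r(0) ≠ 0 and b ≤ a). Then there exist C, D in the Iwahori subgroup 𝓑 such that C·(g·p(Y))·D is the monomial matrix with rows (−t^{2a}, 0, 0), (0, 0, t^{−a}), (0, t^{−a}, 0); in particular g·p(Y) lies in the corresponding Iwahori double coset 𝓑·w·𝓑 in SL_3(F). -/

import Mathlib

noncomputable section

/-- The field of formal Laurent series over `ℂ`. -/
abbrev FF : Type := LaurentSeries ℂ

/-- The uniformizer `t` of `ℂ((t))`. -/
def tF : FF := HahnSeries.single (1 : ℤ) (1 : ℂ)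

/-- An element of `F = ℂ((t))` is integral if it lies in `A = ℂ[[t]]`,
i.e. all coefficients of negative index vanish. -/
def Integral (x : FF) : Prop := ∀ m : ℤ, m < 0 → x.coeff m = 0

/-- Membership in the Iwahori subgroup `𝓑` of `SL₃(F)`: all entries integral,
determinant `1`, and the matrix of constant terms `h(0)` is upper triangular. -/
def MemIwahori (h : Matrix (Fin 3) (Fin 3) FF) : Prop :=
  h.det = 1 ∧ (∀ i j : Fin 3, Integral (h i j)) ∧
    ∀ i j : Fin 3, (j : ℕ) < (i : ℕ) → (h i j).coeff 0 = 0

/-- The matrix `g·p(Y)` where `Y = E₁₂ + E₂₃`, `g = −(E₁₃ + E₂₂ + E₃₁)` and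
`p(Y) = Id − t^{-a}·q·Y − t^{-b}·r·Y²`; explicitly it has rows
`(0, 0, −1)`, `(0, −1, t^{-a}q)`, `(−1, t^{-a}q, t^{-b}r)`. -/
def gpY (q r : PowerSeries ℂ) (a b : ℕ) : Matrix (Fin 3) (Fin 3) FF :=
  !![0,  0,                       -1;
     0,  -1,                      tF ^ (-(a : ℤ)) * (q : FF);
     -1, tF ^ (-(a : ℤ)) * (q : FF), tF ^ (-(b : ℤ)) * (r : FF)]


/-! With `P = t^a` and `w = t^(a-b) r`, a power series because `b ≤ a` or `r = 0`, the element
`S = q² + P w` of `A` has constant term `q(0)² ≠ 0` (as `a ≥ 1`), so it is a unit of `A`.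
Writing `t^(-b) r = P⁻¹ w`, the identity `C·g p(Y)·D = w₀` for the explicit factors
`C = leftFactor P q S⁻¹` and `D = rightFactor P q w S⁻¹` is a polynomial identity that only uses
`P P⁻¹ = 1` and `S S⁻¹ = 1`. Both factors have entries in `A` and determinant `1`; `C` is
unitriangular, and the constant-term matrix of `D` is upper triangular because `P(0) = 0`. -/

open Matrix PowerSeries

section Factors

variable {K L : Type*} [CommRing K] [CommRing L]

def leftFactor (P Q si : K) : Matrix (Fin 3) (Fin 3) K :=
  !![1, P * Q * si, P ^ 2 * si; 0, 1, 0; 0, 0, 1]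

def rightFactor (P Q w si : K) : Matrix (Fin 3) (Fin 3) K :=
  !![Q ^ 2 + P * w, 0, 0; P * Q, Q * si, -(w * si); P ^ 2, P * si, Q * si]

lemma leftFactor_map (f : K →+* L) (P Q si : K) :
    (leftFactor P Q si).map f = leftFactor (f P) (f Q) (f si) := by
  ext i j
  fin_cases i <;> fin_cases j <;> simp [leftFactor]

lemma rightFactor_map (f : K →+* L) (P Q w si : K) :
    (rightFactor P Q w si).map f = rightFactor (f P) (f Q) (f w) (f si) := by
  ext i j
  fin_cases i <;> fin_cases j <;> simp [rightFactor]

lemma isUpperTriangular_leftFactor (P Q si : K) : (leftFactor P Q si).IsUpperTriangular := by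
  intro i j hij
  fin_cases i <;> fin_cases j <;> simp_all [leftFactor]

lemma isUpperTriangular_rightFactor_zero {Q w si : K} :
    (rightFactor 0 Q w si).IsUpperTriangular := by
  intro i j hij
  fin_cases i <;> fin_cases j <;> simp_all [rightFactor]

lemma det_leftFactor (P Q si : K) : (leftFactor P Q si).det = 1 := by
  rw [det_of_isUpperTriangular (isUpperTriangular_leftFactor P Q si), Fin.prod_univ_three]
  simp [leftFactor]

lemma det_rightFactor {P Q w si : K} (hsi : (Q ^ 2 + P * w) * si = 1) :
    (rightFactor P Q w si).det = 1 := by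
  rw [det_fin_three]
  simp only [rightFactor, of_apply, cons_val', cons_val_zero, cons_val_one, cons_val_two,
    cons_val_fin_one, head_cons, tail_cons, head_fin_const]
  linear_combination ((Q ^ 2 + P * w) * si + 1) * hsi

lemma leftFactor_mul_mul_rightFactor {P Q w si pi : K} (hsi : (Q ^ 2 + P * w) * si = 1)
    (hpi : P * pi = 1) :
    leftFactor P Q si * !![0, 0, -1; 0, -1, pi * Q; -1, pi * Q, pi * w] *
      rightFactor P Q w si = !![-P ^ 2, 0, 0; 0, 0, pi; 0, pi, 0] := by
  rw [leftFactor, rightFactor, mul_fin_three, mul_fin_three]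
  simp only [EmbeddingLike.apply_eq_iff_eq, vecCons_inj, and_true]
  refine ⟨⟨?_, ?_, ?_⟩, ⟨?_, ?_, ?_⟩, ?_, ?_, ?_⟩
  · linear_combination (P ^ 2 * Q ^ 2 * si + P ^ 2 * (Q ^ 2 + P * w) * si) * hpi
  · linear_combination (P * Q ^ 2 * si ^ 2 + P * si ^ 2 * (Q ^ 2 + P * w)) * hpi + P * si * hsi
  · linear_combination (-P * Q * w * si ^ 2 + Q * si ^ 2 * (Q ^ 2 + P * w)) * hpi + Q * si * hsi
  · linear_combination P * Q * hpi
  · linear_combination Q * si * hpi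
  · linear_combination pi * hsi - w * si * hpi
  · linear_combination (Q ^ 2 + P * w) * hpi
  · linear_combination pi * hsi
  · ring

end Factors

section LaurentSeries

lemma integral_coe (p : ℂ⟦X⟧) : Integral (p : FF) := fun m hm => by
  rw [PowerSeries.coeff_coe, if_pos hm]

lemma memIwahori_map_coe {M : Matrix (Fin 3) (Fin 3) ℂ⟦X⟧} (hdet : M.det = 1)
    (hM : (M.map constantCoeff).IsUpperTriangular) :
    MemIwahori (M.map (HahnSeries.ofPowerSeries ℤ ℂ)) := by
  refine ⟨?_, fun i j => integral_coe _, fun i j hij => ?_⟩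
  · rw [show M.map _ = (HahnSeries.ofPowerSeries ℤ ℂ).mapMatrix M from rfl, ← RingHom.map_det,
      hdet, map_one]
  · rw [map_apply, ← Nat.cast_zero, LaurentSeries.coeff_coe_powerSeries,
      coeff_zero_eq_constantCoeff_apply]
    exact hM hij

lemma tF_ne_zero : tF ≠ 0 := HahnSeries.single_ne_zero one_ne_zero

lemma coe_X_eq_tF : ((X : ℂ⟦X⟧) : FF) = tF := PowerSeries.coe_X

lemma tF_pow_mul_zpow_neg (n : ℕ) : tF ^ n * tF ^ (-(n : ℤ)) = 1 := by
  rw [← zpow_natCast, ← zpow_add₀ tF_ne_zero, add_neg_cancel, zpow_zero]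

lemma tF_zpow_neg_of_le {a b : ℕ} (h : b ≤ a) :
    tF ^ (-(b : ℤ)) = tF ^ (-(a : ℤ)) * tF ^ (a - b) := by
  rw [← zpow_natCast, ← zpow_add₀ tF_ne_zero]
  congr 1
  omega

lemma gpY_eq (q r : ℂ⟦X⟧) {a b : ℕ} (hr : r = 0 ∨ b ≤ a) :
    gpY q r a b = !![0, 0, -1; 0, -1, tF ^ (-(a : ℤ)) * q;
      -1, tF ^ (-(a : ℤ)) * q, tF ^ (-(a : ℤ)) * ((X ^ (a - b) * r : ℂ⟦X⟧) : FF)] := by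
  have : tF ^ (-(b : ℤ)) * (r : FF) = tF ^ (-(a : ℤ)) * ((X ^ (a - b) * r : ℂ⟦X⟧) : FF) := by
    rcases hr with rfl | hba
    · simp
    · rw [PowerSeries.coe_mul, PowerSeries.coe_pow, coe_X_eq_tF, tF_zpow_neg_of_le hba, mul_assoc]
  rw [gpY, this]

end LaurentSeries

theorem stmt18_general (q r : PowerSeries ℂ) (a b : ℕ) (ha : 1 ≤ a)
    (hq : PowerSeries.constantCoeff q ≠ 0)
    (hr : r = 0 ∨ (PowerSeries.constantCoeff r ≠ 0 ∧ b ≤ a)) :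
    ∃ C D : Matrix (Fin 3) (Fin 3) FF, MemIwahori C ∧ MemIwahori D ∧
      C * gpY q r a b * D =
        !![-(tF ^ ((2 * a : ℕ) : ℤ)), 0, 0;
           0, 0, tF ^ (-(a : ℤ));
           0, tF ^ (-(a : ℤ)), 0] := by
  set w : ℂ⟦X⟧ := X ^ (a - b) * r
  have hP : constantCoeff (X ^ a : ℂ⟦X⟧) = 0 := by
    rw [map_pow, constantCoeff_X, zero_pow (by omega)]
  have hS : (q ^ 2 + X ^ a * w) * (q ^ 2 + X ^ a * w)⁻¹ = 1 :=
    PowerSeries.mul_inv_cancel _ (by simp [hP, hq])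
  set si := (q ^ 2 + X ^ a * w)⁻¹
  refine ⟨(leftFactor (X ^ a) q si).map (HahnSeries.ofPowerSeries ℤ ℂ),
    (rightFactor (X ^ a) q w si).map (HahnSeries.ofPowerSeries ℤ ℂ),
    memIwahori_map_coe (det_leftFactor _ _ _) ?_, memIwahori_map_coe (det_rightFactor hS) ?_, ?_⟩
  · rw [leftFactor_map]
    exact isUpperTriangular_leftFactor _ _ _
  · rw [rightFactor_map, hP]
    exact isUpperTriangular_rightFactor_zero
  · have hS_coe := congrArg (HahnSeries.ofPowerSeries ℤ ℂ) hS
    simp only [map_mul, map_add, map_pow, map_one, coe_X_eq_tF] at hS_coe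
    rw [leftFactor_map, rightFactor_map, gpY_eq q r (hr.imp_right And.right), map_pow,
      coe_X_eq_tF, zpow_natCast, pow_mul']
    exact leftFactor_mul_mul_rightFactor hS_coe (tF_pow_mul_zpow_neg a)

theorem stmt18 (q r : PowerSeries ℂ) (a b : ℕ) (ha : 1 ≤ a) (hb : 1 ≤ b)
    (hq : PowerSeries.constantCoeff q ≠ 0)
    (hr : r = 0 ∨ (PowerSeries.constantCoeff r ≠ 0 ∧ b ≤ a)) :
    ∃ C D : Matrix (Fin 3) (Fin 3) FF, MemIwahori C ∧ MemIwahori D ∧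
      C * gpY q r a b * D =
        !![-(tF ^ ((2 * a : ℕ) : ℤ)), 0, 0;
           0, 0, tF ^ (-(a : ℤ));
           0, tF ^ (-(a : ℤ)), 0] :=
  stmt18_general q r a b ha hq hr

end
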